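/- arXiv:2212.12564 — 2 statements merged into one kernel-verified Lean document; each statement's English description precedes it below -/
import Mathlib

section
/- Let A be a coherent commutative ring and let J ⊆ A be a finitely generated ideal. Then the quotient ring A/J is coherent. -/
/-!
The preimage in `A` of a finitely generated ideal `I` of `A ⧸ J` is finitely generated, since `J`
is, hence finitely presented by coherence of `A`. Dividing it by `J` shows that `I` is finitely
presented over `A`. Finally a module over `A ⧸ J` is its own base change along `A → A ⧸ J`, so an
`A`-presentation of `I` gives an `A ⧸ J`-presentation.
-/

/-- A commutative ring is *coherent* if every finitely generated ideal is
finitely presented as a module. -/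
def IsCoherentRing (A : Type) [CommRing A] : Prop :=
  ∀ I : Ideal A, I.FG → Module.FinitePresentation A I

section SurjectiveAlgebraMap

variable {R S M : Type*} [CommRing R] [CommRing S] [Algebra R S]
  [AddCommGroup M] [Module R M] [Module S M] [IsScalarTower R S M]

theorem isBaseChange_id_of_surjective_algebraMap (h : Function.Surjective (algebraMap R S)) :
    IsBaseChange S (LinearMap.id : M →ₗ[R] M) :=
  IsBaseChange.of_lift_unique _ fun _ _ _ _ _ g =>
    ⟨g.extendScalarsOfSurjective h, rfl, fun _ hg => LinearMap.restrictScalars_injective R hg⟩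

theorem Module.FinitePresentation.of_surjective_algebraMap
    (h : Function.Surjective (algebraMap R S)) [Module.FinitePresentation R M] :
    Module.FinitePresentation S M :=
  FinitePresentation.of_isBaseChange _ (isBaseChange_id_of_surjective_algebraMap h)

end SurjectiveAlgebraMap

theorem Submodule.finitePresentation_of_comap_of_surjective {R M N : Type*} [CommRing R]
    [AddCommGroup M] [Module R M] [AddCommGroup N] [Module R N]
    {f : M →ₗ[R] N} (hf : Function.Surjective f) (hker : (LinearMap.ker f).FG)
    (q : Submodule R N) [Module.FinitePresentation R (q.comap f)] :
    Module.FinitePresentation R q := by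
  refine Module.finitePresentation_of_surjective
    (f.restrict (p := q.comap f) (q := q) fun _ hx => hx) ?_ ?_
  · rintro ⟨y, hy⟩
    obtain ⟨x, rfl⟩ := hf y
    exact ⟨⟨x, hy⟩, rfl⟩
  · rw [LinearMap.ker_restrict]
    refine Submodule.fg_of_fg_map_injective _ (q.comap f).injective_subtype ?_
    rwa [Submodule.map_comap_subtype, inf_eq_right.mpr (LinearMap.ker_le_comap f)]

theorem Ideal.fg_comap_of_surjective {A B : Type*} [CommRing A] [CommRing B] {f : A →+* B}
    (hf : Function.Surjective f) (hker : (RingHom.ker f).FG) {I : Ideal B} (hI : I.FG) :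
    (I.comap f).FG := by
  rw [← Ideal.mk_ker (I := I), RingHom.comap_ker]
  exact Ideal.fg_ker_comp f _ hker (by rwa [Ideal.mk_ker]) hf

/-- Let `A` be a coherent commutative ring and let `J ⊆ A` be a
finitely generated ideal.  Then the quotient ring `A/J` is coherent. -/
theorem isCoherentRing_quotient {A : Type} [CommRing A] (hA : IsCoherentRing A)
    (J : Ideal A) (hJ : J.FG) : IsCoherentRing (A ⧸ J) := by
  intro I hI
  have hpreimage : (I.comap (Ideal.Quotient.mk J)).FG :=
    Ideal.fg_comap_of_surjective Ideal.Quotient.mk_surjective (by rwa [Ideal.mk_ker]) hI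
  have : Module.FinitePresentation A ((I.restrictScalars A).comap J.mkQ) := hA _ hpreimage
  have : Module.FinitePresentation A I :=
    Submodule.finitePresentation_of_comap_of_surjective J.mkQ_surjective
      (by rwa [Submodule.ker_mkQ]) (I.restrictScalars A)
  exact Module.FinitePresentation.of_surjective_algebraMap Ideal.Quotient.mk_surjective
end

section
/- Let A be an additive category. Then A is left coherent (i.e., its category of finitely presented additive functors A → Ab behaves coherently) if and only if every morphism f : A → B in A admits a weak cokernel, i.e. a morphism g : B → C such that the sequence Hom(C,−) → Hom(B,−) → Hom(A,−) of functors is exact. -/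
open CategoryTheory Limits Opposite

universe v u

variable (A : Type u) [Category.{v} A] [Preadditive A] [HasFiniteBiproducts A]

/-- The representable additive functor `Hom(X, −) : A ⥤ Ab`. -/
noncomputable abbrev repFunctor (X : A) : A ⥤ AddCommGrpCat.{v} :=
  preadditiveCoyoneda.obj (op X)

variable {A}

/-- An additive functor `A ⥤ Ab` is finitely generated if it admits an
epimorphism from a representable functor. -/
def IsFGFunctor (F : A ⥤ AddCommGrpCat.{v}) : Prop :=
  ∃ (X : A) (p : repFunctor A X ⟶ F), Epi p

/-- An additive functor `A ⥤ Ab` is finitely presented if it is the cokernel of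
a morphism of representable functors, i.e. there is an exact sequence
`Hom(Y,−) → Hom(X,−) → F → 0`. -/
noncomputable def IsFPFunctor (F : A ⥤ AddCommGrpCat.{v}) : Prop :=
  ∃ (X Y : A) (α : repFunctor A Y ⟶ repFunctor A X), Nonempty (F ≅ cokernel α)

variable (A)

/-- The additive category `A` is left coherent: every finitely generated
subfunctor of a representable functor `Hom(X,−)` is finitely presented. -/
noncomputable def IsLeftCoherent : Prop :=
  ∀ (X : A) (K : A ⥤ AddCommGrpCat.{v}) (i : K ⟶ repFunctor A X),
    Mono i → IsFGFunctor K → IsFPFunctor K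

/-- `g : B ⟶ C` is a weak cokernel of `f : A' ⟶ B`: `g ∘ f = 0` and the induced
sequence `Hom(C,−) → Hom(B,−) → Hom(A',−)` of functors is exact, i.e. any
`h : B ⟶ T` with `h ∘ f = 0` factors through `g`. -/
def IsWeakCokernel {A' B C : A} (f : A' ⟶ B) (g : B ⟶ C) : Prop :=
  f ≫ g = 0 ∧ ∀ (T : A) (h : B ⟶ T), f ≫ h = 0 → ∃ k : C ⟶ T, h = g ≫ k

/-!
By Yoneda, a finitely generated subfunctor `K ⊆ Hom(X,−)`, covered by `Hom(Y,−) ↠ K`, is the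
image of `Hom(f,−)` for some `f : X ⟶ Y`; the kernel of `Hom(Y,−) ↠ K` consists of the `h` with
`f ≫ h = 0`. Hence `g : Y ⟶ Z` is a weak cokernel of `f` exactly when
`Hom(Z,−) → Hom(Y,−) → K → 0` is exact, which is a finite presentation of `K`.

Conversely, let `Hom(a,−) : Hom(Q,−) → Hom(P,−) ↠ K` be a finite presentation of the image of
`Hom(f,−)`. Lifting each of the two epimorphisms onto `K` through the other (Yoneda) gives
`v : Y ⟶ P` and `u : P ⟶ Y` such that `Hom(P,−) ↠ K ⊆ Hom(X,−)` is `Hom(f ≫ v,−)` and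
`f ≫ v ≫ u = f`. Then `a` is a weak cokernel of `f ≫ v`, and, as in Schanuel's lemma,
`(v ≫ a, 𝟙 - v ≫ u) : Y ⟶ Q ⊞ Y` is a weak cokernel of `f`.
-/

lemma CategoryTheory.ShortComplex.exact_iff_forall_exact_map_evaluation {J C : Type*}
    [Category J] [Category C] [Abelian C] (S : ShortComplex (J ⥤ C)) :
    S.Exact ↔ ∀ j : J, (S.map ((evaluation J C).obj j)).Exact := by
  refine ⟨fun h j => h.map _, fun h => ?_⟩
  rw [ShortComplex.exact_iff_isZero_homology, Functor.isZero_iff]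
  exact fun j => (S.mapHomologyIso ((evaluation J C).obj j)).isZero_iff.1
    ((ShortComplex.exact_iff_isZero_homology _).1 (h j))

lemma CategoryTheory.ShortComplex.exact_iff_exact_comp_mono {C : Type*} [Category C]
    [Preadditive C] (S : ShortComplex C) {Z : C} (i : S.X₃ ⟶ Z) [Mono i] :
    S.Exact ↔ (ShortComplex.mk S.f (S.g ≫ i) (by simp)).Exact :=
  ShortComplex.exact_iff_of_epi_of_isIso_of_mono
    { τ₁ := 𝟙 _, τ₂ := 𝟙 _, τ₃ := i }

lemma CategoryTheory.NatTrans.surjective_app_of_epi {C : Type*} [Category C]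
    {F G : C ⥤ AddCommGrpCat.{v}} (q : F ⟶ G) [Epi q] (T : C) :
    Function.Surjective (q.app T) :=
  (AddCommGrpCat.epi_iff_surjective _).1 inferInstance

section

variable {C : Type*} [Category C] [Preadditive C]

lemma isWeakCokernel_biprod_lift {X Y P Q : C} {f : X ⟶ Y} {v : Y ⟶ P} {u : P ⟶ Y}
    {a : P ⟶ Q} [HasBinaryBiproduct Q Y] (ha : IsWeakCokernel C (f ≫ v) a)
    (hvu : f ≫ v ≫ u = f) :
    IsWeakCokernel C f (biprod.lift (v ≫ a) (𝟙 Y - v ≫ u)) := by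
  refine ⟨biprod.hom_ext _ _ (by simpa using ha.1) (by simp [hvu]), fun T h hfh => ?_⟩
  obtain ⟨w, hw⟩ := ha.2 T (u ≫ h) (by rw [Category.assoc, reassoc_of% hvu, hfh])
  refine ⟨biprod.desc w h, ?_⟩
  simp [← hw]

lemma app_eq_map_app_id {X : C} {F : C ⥤ AddCommGrpCat.{v}} (β : repFunctor C X ⟶ F) {T : C}
    (h : X ⟶ T) : β.app T h = F.map h (β.app X (𝟙 X)) := by
  have hnat := NatTrans.naturality_apply β h (show (repFunctor C X).obj X from 𝟙 X)
  exact (congrArg (β.app T) (Category.id_comp h).symm).trans hnat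

lemma eq_preadditiveCoyoneda_map_of_app_id {X Y : C} (β : repFunctor C X ⟶ repFunctor C Y)
    {c : Y ⟶ X} (hc : β.app X (𝟙 X) = c) : β = preadditiveCoyoneda.map c.op := by
  subst hc
  ext T h
  exact app_eq_map_app_id β h

lemma app_app_eq_comp {X Y T : C} {K : C ⥤ AddCommGrpCat.{v}} {p : repFunctor C Y ⟶ K}
    {i : K ⟶ repFunctor C X} {f : X ⟶ Y} (hpi : p ≫ i = preadditiveCoyoneda.map f.op)
    (h : Y ⟶ T) : i.app T (p.app T h) = f ≫ h :=
  ConcreteCategory.congr_hom (NatTrans.congr_app hpi T) h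

lemma preadditiveCoyoneda_map_comp_eq_zero {X Y Z : C} {f : X ⟶ Y} {g : Y ⟶ Z} (hfg : f ≫ g = 0) :
    preadditiveCoyoneda.map g.op ≫ preadditiveCoyoneda.map f.op = 0 := by
  ext T (k : Z ⟶ T)
  change f ≫ g ≫ k = 0
  rw [reassoc_of% hfg, zero_comp]

lemma exact_preadditiveCoyoneda_map_iff_isWeakCokernel {X Y Z : C} (f : X ⟶ Y) (g : Y ⟶ Z)
    (w : preadditiveCoyoneda.map g.op ≫ preadditiveCoyoneda.map f.op = 0) :
    (ShortComplex.mk _ _ w).Exact ↔ IsWeakCokernel C f g := by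
  have hfg : f ≫ g = 0 := by
    have hw : f ≫ g ≫ 𝟙 Z = 0 := ConcreteCategory.congr_hom (NatTrans.congr_app w Z) (𝟙 Z)
    simpa using hw
  simp only [ShortComplex.exact_iff_forall_exact_map_evaluation, ShortComplex.ab_exact_iff]
  change (∀ (T : C) (h : Y ⟶ T), f ≫ h = 0 → ∃ k : Z ⟶ T, g ≫ k = h) ↔ _
  simp only [IsWeakCokernel, hfg, true_and, eq_comm]

lemma exact_iff_isWeakCokernel_of_comp_mono {X Y Z : C} {K : C ⥤ AddCommGrpCat.{v}}
    {p : repFunctor C Y ⟶ K} {i : K ⟶ repFunctor C X} [Mono i] {f : X ⟶ Y}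
    (hpi : p ≫ i = preadditiveCoyoneda.map f.op) (g : Y ⟶ Z)
    (w : preadditiveCoyoneda.map g.op ≫ p = 0) :
    (ShortComplex.mk _ _ w).Exact ↔ IsWeakCokernel C f g := by
  rw [ShortComplex.exact_iff_exact_comp_mono _ i, ← exact_preadditiveCoyoneda_map_iff_isWeakCokernel f g
    (by rw [← hpi, ← Category.assoc, w, zero_comp])]
  simp only [hpi]

lemma isFPFunctor_of_isWeakCokernel {X Y Z : C} {K : C ⥤ AddCommGrpCat.{v}}
    (p : repFunctor C Y ⟶ K) [Epi p] (i : K ⟶ repFunctor C X) [Mono i] {f : X ⟶ Y}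
    (hpi : p ≫ i = preadditiveCoyoneda.map f.op) {g : Y ⟶ Z} (hg : IsWeakCokernel C f g) :
    IsFPFunctor K := by
  have w : preadditiveCoyoneda.map g.op ≫ p = 0 := by
    rw [← cancel_mono i, Category.assoc, hpi, zero_comp]
    exact preadditiveCoyoneda_map_comp_eq_zero hg.1
  have hS := (exact_iff_isWeakCokernel_of_comp_mono hpi g w).2 hg
  have : Epi (ShortComplex.mk _ _ w).g := ‹Epi p›
  exact ⟨Y, Z, _, ⟨hS.gIsCokernel.coconePointUniqueUpToIso (colimit.isColimit _)⟩⟩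

lemma exists_isWeakCokernel_of_isFPFunctor [HasBinaryBiproducts C] {X Y : C}
    {K : C ⥤ AddCommGrpCat.{v}} (p : repFunctor C Y ⟶ K) [Epi p] (i : K ⟶ repFunctor C X)
    [Mono i] {f : X ⟶ Y} (hpi : p ≫ i = preadditiveCoyoneda.map f.op) (hK : IsFPFunctor K) :
    ∃ (Z : C) (g : Y ⟶ Z), IsWeakCokernel C f g := by
  obtain ⟨P, Q, α, ⟨e⟩⟩ := hK
  obtain ⟨a, rfl⟩ := preadditiveCoyoneda.map_surjective α
  let π := cokernel.π (preadditiveCoyoneda.map a) ≫ e.inv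
  have hπ : (ShortComplex.mk (preadditiveCoyoneda.map a) π (by simp [π])).Exact :=
    (ShortComplex.exact_iff_exact_comp_mono (.mk _ _ (cokernel.condition _)) e.inv).1
      (ShortComplex.exact_of_g_is_cokernel _ (cokernelIsCokernel _))
  obtain ⟨v, hv⟩ : ∃ v : Y ⟶ P, p.app P v = π.app P (𝟙 P) := p.surjective_app_of_epi P _
  obtain ⟨u, hu⟩ : ∃ u : P ⟶ Y, π.app Y u = p.app Y (𝟙 Y) := π.surjective_app_of_epi Y _
  have hπi : π ≫ i = preadditiveCoyoneda.map (f ≫ v).op := by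
    refine eq_preadditiveCoyoneda_map_of_app_id _ ?_
    have := app_app_eq_comp hpi v
    rwa [hv] at this
  have hvu : f ≫ v ≫ u = f := by
    have := app_app_eq_comp hπi u
    rw [hu, app_app_eq_comp hpi, Category.comp_id, Category.assoc] at this
    exact this.symm
  have ha : IsWeakCokernel C (f ≫ v) a.unop :=
    (exact_iff_isWeakCokernel_of_comp_mono hπi a.unop _).1 hπ
  exact ⟨_, _, isWeakCokernel_biprod_lift ha hvu⟩

end

/-- Let `A` be an additive category.  Then `A` is left
coherent (i.e. its category of finitely presented additive functors `A → Ab`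
behaves coherently: finitely generated subfunctors of representables are
finitely presented) if and only if every morphism `f : A' → B` in `A` admits a
weak cokernel `g : B → C`, i.e. one for which the sequence of functors
`Hom(C,−) → Hom(B,−) → Hom(A',−)` is exact. -/
theorem isLeftCoherent_iff_weakCokernels :
    IsLeftCoherent A ↔ ∀ {A' B : A} (f : A' ⟶ B), ∃ (C : A) (g : B ⟶ C),
      IsWeakCokernel A f g := by
  constructor
  · intro hA X Y f
    have := hasBinaryBiproducts_of_finite_biproducts A
    let θ := preadditiveCoyoneda.map f.op
    exact exists_isWeakCokernel_of_isFPFunctor (factorThruImage θ) (image.ι θ) (image.fac θ)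
      (hA X _ (image.ι θ) inferInstance ⟨Y, factorThruImage θ, inferInstance⟩)
  · rintro hA X K i _ ⟨Y, p, _⟩
    obtain ⟨f, hf⟩ := preadditiveCoyoneda.map_surjective (p ≫ i)
    obtain ⟨Z, g, hg⟩ := hA f.unop
    exact isFPFunctor_of_isWeakCokernel p i hf.symm hg
end
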